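/- For s ≥ 3 and t ≥ 1, the graph K_{s,s}^− ⊛ J_t is a connected (st−1)-regular graph on 2st vertices with spectrum {[st−1]^1, [−st+2t−1]^1, [2t−1]^{s−1}, [−1]^{2st−s−1}}. -/

import Mathlib

open Polynomial

noncomputable def adjm {V : Type*} [Fintype V] [DecidableEq V] (G : SimpleGraph V) :
    Matrix V V ℝ :=
  @SimpleGraph.adjMatrix ℝ V G (Classical.decRel _) _ _

/-- The adjacency spectrum of `G`, as a multiset of real roots of the
characteristic polynomial (so multiplicities are counted). -/
noncomputable def spec {V : Type*} [Fintype V] [DecidableEq V] (G : SimpleGraph V) :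
    Multiset ℝ :=
  (adjm G).charpoly.roots

/-- `G` is `k`-regular: every vertex has exactly `k` neighbours. -/
def IsReg {V : Type*} (G : SimpleGraph V) (k : ℕ) : Prop :=
  ∀ v : V, (G.neighborSet v).ncard = k
/-- The clique blow-up `G ⊛ J_t`. -/
def blowup {V : Type*} (G : SimpleGraph V) (t : ℕ) : SimpleGraph (V × Fin t) where
  Adj x y := G.Adj x.1 y.1 ∨ (x.1 = y.1 ∧ x.2 ≠ y.2)
  symm := ⟨by
    rintro ⟨u, i⟩ ⟨v, j⟩ (h | ⟨h, hij⟩)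
    · exact Or.inl h.symm
    · exact Or.inr ⟨h.symm, hij.symm⟩⟩
  loopless := ⟨by rintro ⟨u, i⟩ (h | ⟨-, h⟩) <;> simp_all⟩

/-- `K_{s,s}⁻`: the complete bipartite graph `K_{s,s}` minus a perfect matching. -/
def KssMinus (s : ℕ) : SimpleGraph (Fin s ⊕ Fin s) where
  Adj x y :=
    match x, y with
    | .inl i, .inr j => i ≠ j
    | .inr i, .inl j => i ≠ j
    | _, _ => False
  symm := ⟨by rintro (i | i) (j | j) h <;> simp_all <;> exact fun e => h e.symm⟩
  loopless := ⟨by rintro (i | i) h <;> simp_all⟩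

/-!
The adjacency matrix of `G ⊛ J_t` is `(A(G) + I) ⊗ J_t - I`, and after listing the vertices of
`K_{s,s}⁻` as `Bool × Fin s` its adjacency matrix is `(J_2 - I) ⊗ (J_s - I)`. The spectrum of a
Kronecker product of symmetric matrices consists of the products of eigenvalues, and `J_n` has
spectrum `{n, 0^(n-1)}`. Hence `K_{s,s}⁻` has spectrum `{±(s-1), (±1)^(s-1)}`, and each eigenvalue
`μ` of `G` contributes `(μ + 1)t - 1` once and `-1` with multiplicity `t - 1` to the spectrum of
`G ⊛ J_t`.
-/

open Matrix Kronecker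

namespace Matrix

variable {n m R : Type*} [Fintype n] [DecidableEq n] [Fintype m] [DecidableEq m]

theorem roots_charpoly_diagonal [CommRing R] [IsDomain R] (d : n → R) :
    (diagonal d).charpoly.roots = Finset.univ.val.map d := by
  rw [charpoly_diagonal,
    roots_prod _ _ (Finset.prod_ne_zero_iff.mpr fun i _ => X_sub_C_ne_zero (d i))]
  simp [Finset.univ.val.bind_singleton]

theorem roots_charpoly_add_scalar [CommRing R] [IsDomain R] (M : Matrix n n R) (c : R) :
    (M + scalar n c).charpoly.roots = M.charpoly.roots.map (· + c) := by
  rw [← sub_neg_eq_add, ← map_neg, charpoly_sub_scalar, ← one_mul X, ← C_1,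
    roots_comp_C_mul_X_add_C _ _ _ isUnit_one]
  simp

theorem roots_charpoly_sub_one [CommRing R] [IsDomain R] (M : Matrix n n R) :
    (M - 1).charpoly.roots = M.charpoly.roots.map (· - 1) := by
  rw [sub_eq_add_neg, ← map_one (scalar n), ← map_neg, roots_charpoly_add_scalar]
  simp [sub_eq_add_neg]

theorem IsHermitian.roots_charpoly_kronecker {𝕜 : Type*} [RCLike 𝕜] {A : Matrix n n 𝕜}
    {B : Matrix m m 𝕜} (hA : A.IsHermitian) (hB : B.IsHermitian) :
    (A ⊗ₖ B).charpoly.roots = A.charpoly.roots.bind fun μ => B.charpoly.roots.map (μ * ·) := by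
  set U := hA.eigenvectorUnitary
  set V := hB.eigenvectorUnitary
  have hAB : A ⊗ₖ B = ((U : Matrix n n 𝕜) ⊗ₖ (V : Matrix m m 𝕜)) *
      diagonal (fun p : n × m => (hA.eigenvalues p.1 : 𝕜) * hB.eigenvalues p.2) *
      (star (U : Matrix n n 𝕜) ⊗ₖ star (V : Matrix m m 𝕜)) := by
    conv_lhs => rw [hA.spectral_theorem, hB.spectral_theorem]
    simp only [Unitary.conjStarAlgAut_apply, mul_kronecker_mul, diagonal_kronecker_diagonal]
    rfl
  rw [hAB, charpoly_mul_comm, ← Matrix.mul_assoc, ← mul_kronecker_mul]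
  simp only [Unitary.coe_star_mul_self, one_kronecker_one, Matrix.one_mul, roots_charpoly_diagonal,
    hA.roots_charpoly_eq_eigenvalues, hB.roots_charpoly_eq_eigenvalues]
  rw [← Finset.univ_product_univ, Finset.product_val]
  change Multiset.map _ (Multiset.product _ _) = _
  rw [Multiset.product, Multiset.map_bind, Multiset.bind_map]
  simp [Multiset.map_map]

theorem roots_charpoly_of_one [CommRing R] [IsDomain R] [Nonempty n] :
    (of fun _ _ : n => (1 : R)).charpoly.roots =
      (Fintype.card n : R) ::ₘ Multiset.replicate (Fintype.card n - 1) 0 := by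
  obtain ⟨k, hk⟩ : ∃ k, Fintype.card n = k + 1 := Nat.exists_eq_add_one.mpr Fintype.card_pos
  have hJ : (of fun _ _ : n => (1 : R)) = vecMulVec 1 1 := by ext; simp [vecMulVec]
  have hdot : (1 : n → R) ⬝ᵥ 1 = Fintype.card n := by simp [dotProduct]
  have hfac : X ^ (k + 1) - ((k + 1 : ℕ) : R) • X ^ k = (X - C ((k + 1 : ℕ) : R)) * X ^ k := by
    rw [smul_eq_C_mul]; ring
  rw [hJ, charpoly_vecMulVec, hdot, hk, Nat.add_sub_cancel, hfac,
    roots_mul (mul_ne_zero (X_sub_C_ne_zero _) (pow_ne_zero _ X_ne_zero)), roots_X_sub_C,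
    roots_X_pow, Multiset.singleton_add, Multiset.nsmul_singleton]

omit [Fintype n] [DecidableEq n] in
theorem isHermitian_of_one {𝕜 : Type*} [RCLike 𝕜] : (of fun _ _ : n => (1 : 𝕜)).IsHermitian := by
  ext; simp

end Matrix

theorem Multiset.replicate_bind {α β : Type*} (n : ℕ) (a : α) (f : α → Multiset β) :
    (Multiset.replicate n a).bind f = n • f a := by
  induction n with
  | zero => simp
  | succ n ih => rw [Multiset.replicate_succ, Multiset.cons_bind, ih, succ_nsmul, add_comm]

theorem adjm_apply {V : Type*} [Fintype V] [DecidableEq V] (G : SimpleGraph V)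
    [DecidableRel G.Adj] (v w : V) : adjm G v w = if G.Adj v w then 1 else 0 := by
  rw [adjm, SimpleGraph.adjMatrix_apply]
  congr

theorem isHermitian_adjm {V : Type*} [Fintype V] [DecidableEq V] (G : SimpleGraph V) :
    (adjm G).IsHermitian := by
  classical
  exact G.isHermitian_adjMatrix ℝ

theorem adjm_blowup {V : Type*} [Fintype V] [DecidableEq V] (G : SimpleGraph V) (t : ℕ) :
    adjm (blowup G t) = (adjm G + 1) ⊗ₖ of (fun _ _ : Fin t => (1 : ℝ)) - 1 := by
  classical
  ext ⟨x, i⟩ ⟨y, j⟩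
  by_cases hxy : x = y
  · subst hxy
    by_cases hij : i = j <;> simp [adjm_apply, blowup, hij]
  · by_cases hadj : G.Adj x y <;> simp [adjm_apply, blowup, hxy, hadj]

theorem adjm_KssMinus (s : ℕ) :
    adjm (KssMinus s) = reindex (Equiv.boolProdEquivSum (Fin s)) (Equiv.boolProdEquivSum (Fin s))
      ((of (fun _ _ : Bool => (1 : ℝ)) - 1) ⊗ₖ (of (fun _ _ : Fin s => (1 : ℝ)) - 1)) := by
  classical
  ext (i | i) (j | j) <;> by_cases h : i = j <;> simp [adjm_apply, KssMinus, h, eq_comm]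

theorem spec_blowup {V : Type*} [Fintype V] [DecidableEq V] (G : SimpleGraph V) (t : ℕ)
    [NeZero t] :
    spec (blowup G t) =
      (spec G).bind fun μ => ((μ + 1) * t - 1) ::ₘ Multiset.replicate (t - 1) (-1) := by
  rw [spec, adjm_blowup, roots_charpoly_sub_one,
    ((isHermitian_adjm G).add isHermitian_one).roots_charpoly_kronecker isHermitian_of_one,
    ← map_one (scalar V), roots_charpoly_add_scalar, roots_charpoly_of_one, spec]
  simp [Multiset.map_bind, Multiset.bind_map, Multiset.map_replicate]

theorem spec_KssMinus (s : ℕ) [NeZero s] :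
    spec (KssMinus s) =
      ({(s : ℝ) - 1, 1 - (s : ℝ)} : Multiset ℝ) + Multiset.replicate (s - 1) (-1) +
        Multiset.replicate (s - 1) 1 := by
  rw [spec, adjm_KssMinus, charpoly_reindex,
    (isHermitian_of_one.sub isHermitian_one).roots_charpoly_kronecker
      (isHermitian_of_one.sub isHermitian_one),
    roots_charpoly_sub_one, roots_charpoly_sub_one, roots_charpoly_of_one, roots_charpoly_of_one]
  norm_num [Multiset.map_replicate, Multiset.insert_eq_cons]

theorem spec_blowup_KssMinus (s t : ℕ) [NeZero s] [NeZero t] :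
    spec (blowup (KssMinus s) t) =
      {((s : ℝ) * t - 1 : ℝ), (-(s : ℝ) * t + 2 * t - 1 : ℝ)} +
        Multiset.replicate (s - 1) (2 * (t : ℝ) - 1) +
        Multiset.replicate (2 * s * t - s - 1) (-1 : ℝ) := by
  rw [spec_blowup, spec_KssMinus]
  simp only [Multiset.add_bind, Multiset.insert_eq_cons, Multiset.cons_bind,
    Multiset.singleton_bind, Multiset.replicate_bind]
  simp only [← Multiset.singleton_add, smul_add, Multiset.nsmul_singleton,
    Multiset.nsmul_replicate]
  have hcount : 2 * s * t - s - 1 =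
      (t - 1) + (t - 1) + (s - 1) + (s - 1) * (t - 1) + (s - 1) * (t - 1) := by
    obtain ⟨u, rfl⟩ := Nat.exists_eq_add_one.mpr (NeZero.pos s)
    obtain ⟨v, rfl⟩ := Nat.exists_eq_add_one.mpr (NeZero.pos t)
    simp only [Nat.add_sub_cancel]
    ring_nf
    omega
  rw [show ((s : ℝ) - 1 + 1) * t - 1 = s * t - 1 by ring,
    show (1 - (s : ℝ) + 1) * t - 1 = -s * t + 2 * t - 1 by ring,
    show ((-1 : ℝ) + 1) * t - 1 = -1 by ring, show ((1 : ℝ) + 1) * t - 1 = 2 * t - 1 by ring,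
    hcount]
  simp only [Multiset.replicate_add]
  abel

theorem isReg_blowup {V : Type*} [Finite V] {G : SimpleGraph V} {d : ℕ} (hG : IsReg G d) (t : ℕ) :
    IsReg (blowup G t) (d * t + (t - 1)) := by
  rintro ⟨x, a⟩
  have hsplit : (blowup G t).neighborSet (x, a) =
      G.neighborSet x ×ˢ Set.univ ∪ {x} ×ˢ {a}ᶜ := by
    ext ⟨y, b⟩
    simp [blowup, eq_comm]
  have hdisj : Disjoint (G.neighborSet x ×ˢ (Set.univ : Set (Fin t))) ({x} ×ˢ {a}ᶜ) :=
    Set.disjoint_prod.mpr (Or.inl (by simp))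
  rw [hsplit, Set.ncard_union_eq hdisj, Set.ncard_prod, Set.ncard_prod, hG x, Set.ncard_univ,
    Set.ncard_compl, Set.ncard_singleton, Set.ncard_singleton, Nat.card_eq_fintype_card,
    Fintype.card_fin, one_mul]

theorem isReg_KssMinus (s : ℕ) : IsReg (KssMinus s) (s - 1) := by
  have hside : ∀ (f : Fin s → Fin s ⊕ Fin s), Function.Injective f → ∀ i : Fin s,
      (f '' {i}ᶜ).ncard = s - 1 := fun f hf i => by
    rw [Set.ncard_image_of_injective _ hf, Set.ncard_compl, Set.ncard_singleton, Nat.card_fin]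
  rintro (i | i)
  · rw [← hside Sum.inr Sum.inr_injective i]
    congr 1
    ext (j | j) <;> simp [KssMinus, eq_comm]
  · rw [← hside Sum.inl Sum.inl_injective i]
    congr 1
    ext (j | j) <;> simp [KssMinus, eq_comm]

theorem connected_blowup {V : Type*} {G : SimpleGraph V} (hG : G.Connected) (t : ℕ)
    [NeZero t] : (blowup G t).Connected := by
  have hfib : ∀ x (a b : Fin t), (blowup G t).Reachable (x, a) (x, b) := fun x a b => by
    rcases eq_or_ne a b with rfl | hab
    · rfl
    · exact SimpleGraph.Adj.reachable (Or.inr ⟨rfl, hab⟩)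
  let layer (a : Fin t) : G →g blowup G t := ⟨fun x => (x, a), Or.inl⟩
  have := hG.nonempty
  exact ⟨fun ⟨x, a⟩ ⟨y, b⟩ => ((hG x y).map (layer a)).trans (hfib y a b)⟩

theorem connected_KssMinus {s : ℕ} (hs : 3 ≤ s) : (KssMinus s).Connected := by
  have hinl : ∀ i j, (KssMinus s).Reachable (.inl i) (.inl j) := fun i j => by
    obtain ⟨k, hki, hkj⟩ := Fin.exists_ne_and_ne_of_two_lt i j hs
    have hik : (KssMinus s).Adj (.inl i) (.inr k) := hki.symm
    have hkj : (KssMinus s).Adj (.inr k) (.inl j) := hkj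
    exact hik.reachable.trans hkj.reachable
  have hinr : ∀ i j, (KssMinus s).Reachable (.inr i) (.inl j) := fun i j => by
    obtain ⟨k, hki, -⟩ := Fin.exists_ne_and_ne_of_two_lt i i hs
    have hik : (KssMinus s).Adj (.inr i) (.inl k) := hki.symm
    exact hik.reachable.trans (hinl k j)
  have : NeZero s := ⟨by omega⟩
  have hub : ∀ w, (KssMinus s).Reachable w (.inl 0) := by
    rintro (i | i)
    · exact hinl i 0
    · exact hinr i 0
  exact ⟨fun u v => (hub u).trans (hub v).symm⟩

/-- For `s ≥ 3` and `t ≥ 1`, `K_{s,s}⁻ ⊛ J_t` is a connected `(st-1)`-regular graph on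
`2st` vertices with spectrum `{[st-1]^1, [-st+2t-1]^1, [2t-1]^{s-1}, [-1]^{2st-s-1}}`. -/
theorem stmt_9 (s t : ℕ) (hs : 3 ≤ s) (ht : 1 ≤ t) :
    (blowup (KssMinus s) t).Connected ∧
    IsReg (blowup (KssMinus s) t) (s * t - 1) ∧
    spec (blowup (KssMinus s) t) =
      {((s : ℝ) * t - 1 : ℝ), (-(s : ℝ) * t + 2 * t - 1 : ℝ)} +
        Multiset.replicate (s - 1) (2 * (t : ℝ) - 1) +
        Multiset.replicate (2 * s * t - s - 1) (-1 : ℝ) := by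
  have : NeZero s := ⟨by omega⟩
  have : NeZero t := ⟨by omega⟩
  refine ⟨connected_blowup (connected_KssMinus hs) t, ?_, spec_blowup_KssMinus s t⟩
  have hdeg : (s - 1) * t + (t - 1) = s * t - 1 := by
    have : t ≤ s * t := Nat.le_mul_of_pos_left t (by omega)
    rw [Nat.sub_one_mul]
    omega
  simpa only [hdeg] using isReg_blowup (isReg_KssMinus s) t
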